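/- Let f ∈ ℝ[X₁,…,Xₙ] be a polynomial with f(0) = 0 and ∇f(0) = 0. Suppose 𝒭 > 0 satisfies Condition 1, R is an isolation radius of 0, and R < 𝒭. Then 0 is a local maximizer of f if and only if f(x) < 0 for every x ∈ Γ_ℝ(f) ∩ S_R. -/

import Mathlib

open MvPolynomial Metric Set

noncomputable section

/-- The gradient of a real polynomial `f`, as a map on `ℝⁿ`. -/
def grad {n : ℕ} (f : MvPolynomial (Fin n) ℝ) (x : EuclideanSpace ℝ (Fin n)) :
    EuclideanSpace ℝ (Fin n) :=
  WithLp.toLp 2 (fun i => eval (fun j => x j) (pderiv i f))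

/-- Evaluation of a polynomial as a function on `ℝⁿ`. -/
def evalP {n : ℕ} (f : MvPolynomial (Fin n) ℝ) (x : EuclideanSpace ℝ (Fin n)) : ℝ :=
  eval (fun j => x j) f

/-- The tangency variety `Γ_ℝ(f) = {x | ∃ λ, ∇f(x) = λ x}`. -/
def Gamma {n : ℕ} (f : MvPolynomial (Fin n) ℝ) : Set (EuclideanSpace ℝ (Fin n)) :=
  {x | ∃ l : ℝ, grad f x = l • x}

/-- The set of real critical points `Crit_ℝ(f) = {x | ∇f(x) = 0}`. -/
def Crit {n : ℕ} (f : MvPolynomial (Fin n) ℝ) : Set (EuclideanSpace ℝ (Fin n)) :=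
  {x | grad f x = 0}

/-- Condition 1 for the radius `sR`: for every nonzero `u ∈ Γ_ℝ(f)` with `‖u‖ < sR`,
there exist a neighborhood `O ⊆ B_sR` of `u`, reals `a < t̄ < b` and a differentiable
map `φ : (a,b) → ℝⁿ` with `φ((a,b)) = Γ_ℝ(f) ∩ O`, `φ(t̄) = u`, and the derivative of
`t ↦ Σᵢ φᵢ(t)² = ‖φ(t)‖²` at `t̄` nonzero. -/
def Cond1 {n : ℕ} (f : MvPolynomial (Fin n) ℝ) (sR : ℝ) : Prop :=
  ∀ u ∈ Gamma f, u ≠ 0 → ‖u‖ < sR →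
    ∃ (O : Set (EuclideanSpace ℝ (Fin n))) (a b tb : ℝ)
      (φ : ℝ → EuclideanSpace ℝ (Fin n)),
      O ∈ nhds u ∧ O ⊆ closedBall (0 : EuclideanSpace ℝ (Fin n)) sR ∧
      a < tb ∧ tb < b ∧
      (∀ t ∈ Ioo a b, DifferentiableAt ℝ φ t) ∧
      φ '' Ioo a b = Gamma f ∩ O ∧ φ tb = u ∧
      deriv (fun t => ‖φ t‖ ^ 2) tb ≠ 0

/-!
Sufficiency: the maximum of `f` on `B_R` is attained either inside, at a critical point and hence
at `0`, or on `S_R`, where Lagrange multipliers put it in `Γ_ℝ(f)`.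

Necessity: if `f ≥ 0` at some nonzero point of `B_R` while `f < 0` on a punctured neighbourhood
of `0`, take such a point `z` of minimal norm. Then `f ≤ 0 = f z` on `B_‖z‖`, so `∇f(z) = λ z`
with `λ ≥ 0`, and `λ ≠ 0` by isolation. On the connected component of `z` in
`Γ_ℝ(f) ∩ {a ≤ ‖x‖ ≤ ‖z‖}` the multiplier cannot change sign, so by Condition 1 `f` increases with
the norm along it and attains its minimum on `S_a`. These minima decrease as `a → 0`, which
contradicts `f(0) = 0`.
-/

open Filter Topology RealInnerProductSpace

theorem HasDerivAt.eventually_nhdsLT_lt {g : ℝ → ℝ} {g' t : ℝ} (h : HasDerivAt g g' t)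
    (hg' : 0 < g') : ∀ᶠ s in 𝓝[<] t, g s < g t := by
  filter_upwards [nhdsLT_le_nhdsNE t ((hasDerivAt_iff_tendsto_slope.1 h).eventually
    (eventually_gt_nhds hg')), self_mem_nhdsWithin] with s hs hst
  exact (slope_pos_iff_gt hst).1 hs

theorem HasDerivAt.eventually_nhdsGT_lt {g : ℝ → ℝ} {g' t : ℝ} (h : HasDerivAt g g' t)
    (hg' : g' < 0) : ∀ᶠ s in 𝓝[>] t, g s < g t := by
  filter_upwards [nhdsGT_le_nhdsNE t ((hasDerivAt_iff_tendsto_slope.1 h.neg).eventually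
    (eventually_gt_nhds (neg_pos.2 hg'))), self_mem_nhdsWithin] with s hs hts
  simpa using (slope_pos_iff hts).1 hs

theorem exists_lt_forall_uIcc_of_hasDerivAt {g h : ℝ → ℝ} {c d t : ℝ} {P : ℝ → Prop}
    (hh : HasDerivAt h d t) (hg : HasDerivAt g (c * d) t) (hc : 0 < c) (hd : d ≠ 0)
    (hP : ∀ᶠ s in 𝓝 t, P s) :
    ∃ s, g s < g t ∧ ∀ s' ∈ uIcc s t, P s' ∧ h s' ≤ h t := by
  rcases hd.lt_or_gt with hd | hd
  · obtain ⟨u, hu, hsub⟩ := mem_nhdsGT_iff_exists_Ioc_subset.1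
      ((hg.eventually_nhdsGT_lt (mul_neg_of_pos_of_neg hc hd)).and
        ((hh.eventually_nhdsGT_lt hd).and (nhdsWithin_le_nhds hP)))
    refine ⟨u, (hsub ⟨hu, le_rfl⟩).1, fun s hs => ?_⟩
    rw [uIcc_of_ge (le_of_lt hu)] at hs
    rcases hs.1.eq_or_lt with rfl | hts
    · exact ⟨hP.self_of_nhds, le_rfl⟩
    · exact ⟨(hsub ⟨hts, hs.2⟩).2.2, (hsub ⟨hts, hs.2⟩).2.1.le⟩
  · obtain ⟨u, hu, hsub⟩ := mem_nhdsLT_iff_exists_Ico_subset.1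
      ((hg.eventually_nhdsLT_lt (mul_pos hc hd)).and
        ((hh.eventually_nhdsLT_lt hd).and (nhdsWithin_le_nhds hP)))
    refine ⟨u, (hsub ⟨le_rfl, hu⟩).1, fun s hs => ?_⟩
    rw [uIcc_of_le (le_of_lt hu)] at hs
    rcases hs.2.eq_or_lt with rfl | hst
    · exact ⟨hP.self_of_nhds, le_rfl⟩
    · exact ⟨(hsub ⟨hs.1, hst⟩).2.2, (hsub ⟨hs.1, hst⟩).2.1.le⟩

theorem IsCompact.connectedComponentIn {X : Type*} [TopologicalSpace X] [T2Space X]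
    {F : Set X} (hF : IsCompact F) (x : X) : IsCompact (connectedComponentIn F x) := by
  by_cases hx : x ∈ F
  · rw [connectedComponentIn_eq_image hx]
    have : CompactSpace F := isCompact_iff_compactSpace.1 hF
    exact isClosed_connectedComponent.isCompact.image continuous_subtype_val
  · rw [connectedComponentIn_eq_empty hx]
    exact isCompact_empty

theorem mem_connectedComponentIn_of_continuousOn_uIcc {X : Type*} [TopologicalSpace X]
    {F : Set X} {x : X} {φ : ℝ → X} {s t : ℝ} (hφ : ContinuousOn φ (uIcc s t))
    (hF : ∀ s' ∈ uIcc s t, φ s' ∈ F) (ht : φ t ∈ connectedComponentIn F x) :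
    φ s ∈ connectedComponentIn F x := by
  rw [connectedComponentIn_eq ht]
  exact (isPreconnected_uIcc.image φ hφ).subset_connectedComponentIn
    ⟨t, right_mem_uIcc, rfl⟩ (image_subset_iff.2 hF) ⟨s, left_mem_uIcc, rfl⟩

section InnerProductSpace

variable {E : Type*} [NormedAddCommGroup E] [InnerProductSpace ℝ E]

theorem exists_eq_smul_of_isLocalExtrOn_sphere [CompleteSpace E] {g : E → ℝ} {x v : E}
    (hg : HasStrictFDerivAt g (innerSL ℝ v) x) (hx : x ≠ 0)
    (h : IsLocalExtrOn g (sphere 0 ‖x‖) x) : ∃ l : ℝ, v = l • x := by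
  have hsphere : sphere (0 : E) ‖x‖ = {y | ‖y‖ ^ 2 = ‖x‖ ^ 2} := by
    ext y
    simp
  rw [hsphere] at h
  obtain ⟨a, b, hab, hlin⟩ :=
    h.exists_multipliers_of_hasStrictFDerivAt_1d (hasStrictFDerivAt_norm_sq x) hg
  have hlin' : ∀ y, a * (2 * ⟪x, y⟫) + b * ⟪v, y⟫ = 0 := fun y => by
    simpa using congrArg (· y) hlin
  have hb : b ≠ 0 := by
    rintro rfl
    have ha : a = 0 := by
      have := hlin' x
      rw [real_inner_self_eq_norm_sq, zero_mul, add_zero] at this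
      exact (mul_eq_zero.1 this).resolve_right (by positivity)
    exact hab (by simp [ha])
  refine ⟨-(2 * a) / b, ?_⟩
  have hzero : b • v + (2 * a) • x = 0 := by
    refine ext_inner_right ℝ fun y => ?_
    rw [inner_add_left, real_inner_smul_left, real_inner_smul_left, inner_zero_left]
    linarith [hlin' y]
  rw [div_eq_inv_mul, mul_smul, neg_smul, ← eq_neg_of_add_eq_zero_left hzero, smul_smul,
    inv_mul_cancel₀ hb, one_smul]

theorem apply_self_nonneg_of_isMaxOn_closedBall {g : E → ℝ} {g' : E →L[ℝ] ℝ} {x : E}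
    (hg : HasFDerivAt g g' x) (h : IsMaxOn g (closedBall 0 ‖x‖) x) : 0 ≤ g' x := by
  have hcone : -x ∈ posTangentConeAt (closedBall 0 ‖x‖) x := by
    refine mem_posTangentConeAt_of_segment_subset ((convex_closedBall _ _).segment_subset
      (mem_closedBall_zero_iff.2 le_rfl) ?_)
    simp
  simpa using h.localize.hasFDerivWithinAt_nonpos hg.hasFDerivWithinAt hcone

end InnerProductSpace

section Polynomial

variable {n : ℕ}

theorem grad_mul_X (p : MvPolynomial (Fin n) ℝ) (i : Fin n) (x : EuclideanSpace ℝ (Fin n)) :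
    grad (p * X i) x = evalP p x • EuclideanSpace.single i 1 + x i • grad p x := by
  ext j
  rcases eq_or_ne i j with rfl | hij
  · simp [grad, evalP, mul_comm]
  · simp [grad, evalP, hij.symm, mul_comm]

theorem hasStrictFDerivAt_evalP (f : MvPolynomial (Fin n) ℝ) (x : EuclideanSpace ℝ (Fin n)) :
    HasStrictFDerivAt (evalP f) (innerSL ℝ (grad f x)) x := by
  induction f using MvPolynomial.induction_on with
  | C a =>
    have hf : evalP (C a : MvPolynomial (Fin n) ℝ) = fun _ => a := by ext; simp [evalP]
    have hgrad : grad (C a) x = 0 := by ext i; simp [grad]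
    rw [hf, hgrad, map_zero]
    exact hasStrictFDerivAt_const a x
  | add p q hp hq =>
    have hf : evalP (p + q) = evalP p + evalP q := by ext; simp [evalP]
    have hgrad : grad (p + q) x = grad p x + grad q x := by ext i; simp [grad]
    rw [hf, hgrad, map_add]
    exact hp.add hq
  | mul_X p i hp =>
    have hf : evalP (p * X i) = fun y => evalP p y * y i := by ext; simp [evalP]
    have hgrad : innerSL ℝ (grad (p * X i) x)
        = evalP p x • EuclideanSpace.proj i + x i • innerSL ℝ (grad p x) := by
      ext v
      simp [grad_mul_X, EuclideanSpace.inner_single_left]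
    rw [hf, hgrad]
    exact hp.mul (EuclideanSpace.proj i : EuclideanSpace ℝ (Fin n) →L[ℝ] ℝ).hasStrictFDerivAt

theorem hasFDerivAt_evalP (f : MvPolynomial (Fin n) ℝ) (x : EuclideanSpace ℝ (Fin n)) :
    HasFDerivAt (evalP f) (innerSL ℝ (grad f x)) x :=
  (hasStrictFDerivAt_evalP f x).hasFDerivAt

theorem continuous_evalP (f : MvPolynomial (Fin n) ℝ) : Continuous (evalP f) :=
  continuous_iff_continuousAt.2 fun x => (hasFDerivAt_evalP f x).continuousAt

theorem continuous_grad (f : MvPolynomial (Fin n) ℝ) : Continuous (grad f) :=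
  (PiLp.continuous_toLp 2 _).comp (continuous_pi fun i => continuous_evalP (pderiv i f))

theorem HasDerivAt.evalP_comp (f : MvPolynomial (Fin n) ℝ) {φ : ℝ → EuclideanSpace ℝ (Fin n)}
    {φ' : EuclideanSpace ℝ (Fin n)} {t : ℝ} (hφ : HasDerivAt φ φ' t) :
    HasDerivAt (fun s => evalP f (φ s)) ⟪grad f (φ t), φ'⟫ t :=
  (hasFDerivAt_evalP f (φ t)).comp_hasDerivAt t hφ

theorem grad_eq_zero_of_isLocalMax {f : MvPolynomial (Fin n) ℝ} {x : EuclideanSpace ℝ (Fin n)}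
    (h : IsLocalMax (evalP f) x) : grad f x = 0 := by
  have h0 := h.hasFDerivAt_eq_zero (hasFDerivAt_evalP f x)
  rwa [← norm_eq_zero, innerSL_apply_norm, norm_eq_zero] at h0

theorem mem_Gamma_of_isMaxOn_sphere {f : MvPolynomial (Fin n) ℝ} {x : EuclideanSpace ℝ (Fin n)}
    (hx : x ≠ 0) (h : IsMaxOn (evalP f) (sphere 0 ‖x‖) x) : x ∈ Gamma f :=
  exists_eq_smul_of_isLocalExtrOn_sphere (hasStrictFDerivAt_evalP f x) hx (Or.inr h.localize)

theorem inner_grad_self_ne_zero {f : MvPolynomial (Fin n) ℝ} {x : EuclideanSpace ℝ (Fin n)}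
    (hΓ : x ∈ Gamma f) (hx : x ∉ Crit f) : ⟪grad f x, x⟫ ≠ 0 := by
  obtain ⟨l, hl⟩ := hΓ
  have hl0 : l ≠ 0 := by rintro rfl; exact hx (by simp [Crit, hl])
  have hx0 : x ≠ 0 := by rintro rfl; exact hx (by simp [Crit, hl])
  rw [hl, real_inner_smul_left, real_inner_self_eq_norm_sq]
  positivity

theorem isClosed_Gamma {f : MvPolynomial (Fin n) ℝ} (hgrad : grad f 0 = 0) :
    IsClosed (Gamma f) := by
  -- away from `0`, `∇f x ∈ ℝ x` is the equality case of Cauchy–Schwarz written as an identity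
  have hΓ : Gamma f = {x | ⟪grad f x, x⟫ • x = ‖x‖ ^ 2 • grad f x} := by
    ext x
    constructor
    · rintro ⟨l, hl⟩
      simp only [mem_ofPred_eq, hl, real_inner_smul_left, real_inner_self_eq_norm_sq, smul_smul,
        mul_comm]
    · intro (hx : ⟪grad f x, x⟫ • x = ‖x‖ ^ 2 • grad f x)
      rcases eq_or_ne x 0 with rfl | hx0
      · exact ⟨0, by simp [hgrad]⟩
      · refine ⟨(‖x‖ ^ 2)⁻¹ * ⟪grad f x, x⟫, ?_⟩
        rw [mul_smul, hx, smul_smul, inv_mul_cancel₀ (by positivity), one_smul]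
  rw [hΓ]
  have := continuous_grad f
  exact isClosed_eq (by fun_prop) (by fun_prop)

end Polynomial

section MinimalNorm

variable {E : Type*} [NormedAddCommGroup E] [NormedSpace ℝ E] [ProperSpace E]

theorem exists_isMaxOn_closedBall_of_nonneg {g : E → ℝ} {ε : ℝ} {x : E} (hg : Continuous g)
    (hg0 : g 0 = 0) (hε : 0 < ε) (hneg : ∀ y, y ≠ 0 → ‖y‖ ≤ ε → g y < 0) (hx0 : x ≠ 0)
    (hx : 0 ≤ g x) :
    ∃ z, z ≠ 0 ∧ ‖z‖ ≤ ‖x‖ ∧ IsMaxOn g (closedBall 0 ‖z‖) z ∧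
      ∀ y, y ≠ 0 → ‖y‖ < ‖z‖ → g y < 0 := by
  set D := closedBall 0 ‖x‖ ∩ ({y | 0 ≤ g y} ∩ (ball 0 ε)ᶜ)
  have hD : IsCompact D := (isCompact_closedBall 0 ‖x‖).inter_right
    ((isClosed_le continuous_const hg).inter isOpen_ball.isClosed_compl)
  have hxε : ε < ‖x‖ := lt_of_not_ge fun h => (hneg x hx0 h).not_ge hx
  have hxD : x ∈ D := ⟨mem_closedBall_zero_iff.2 le_rfl, hx, by simpa using hxε.le⟩
  obtain ⟨z, ⟨hzx, hgz, hzε⟩, hzmin⟩ := hD.exists_isMinOn ⟨x, hxD⟩ continuous_norm.continuousOn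
  simp only [mem_closedBall_zero_iff, mem_compl_iff, mem_ball_zero_iff, not_lt] at hzx hzε
  have hz0 : z ≠ 0 := norm_pos_iff.1 (hε.trans_le hzε)
  have hlt : ∀ y, y ≠ 0 → ‖y‖ < ‖z‖ → g y < 0 := by
    intro y hy0 hyz
    rcases le_or_gt ‖y‖ ε with hyε | hyε
    · exact hneg y hy0 hyε
    · by_contra! hgy
      have hyD : y ∈ D :=
        ⟨mem_closedBall_zero_iff.2 (hyz.le.trans hzx), hgy, by simpa using hyε.le⟩
      exact (hzmin hyD).not_gt hyz
  have hle : closedBall 0 ‖z‖ ⊆ {y | g y ≤ 0} := by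
    rw [← closure_ball 0 (norm_ne_zero_iff.2 hz0)]
    refine closure_minimal (fun y hy => ?_) (isClosed_le hg continuous_const)
    rcases eq_or_ne y 0 with rfl | hy0
    · exact hg0.le
    · exact (hlt y hy0 (mem_ball_zero_iff.1 hy)).le
  exact ⟨z, hz0, hzx, fun y hy => (show g y ≤ 0 from hle hy).trans hgz, hlt⟩

end MinimalNorm

section TangencyVariety

variable {n : ℕ} {f : MvPolynomial (Fin n) ℝ}

theorem inner_grad_self_pos_of_mem_connectedComponentIn {F : Set (EuclideanSpace ℝ (Fin n))}
    {x y : EuclideanSpace ℝ (Fin n)} (hF : F ⊆ Gamma f \ Crit f) (hx : 0 < ⟪grad f x, x⟫)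
    (hy : y ∈ connectedComponentIn F x) : 0 < ⟪grad f y, y⟫ := by
  have hxF : x ∈ F := connectedComponentIn_nonempty_iff.1 ⟨y, hy⟩
  by_contra! hle
  have hcont : Continuous fun z => ⟪grad f z, z⟫ := by
    have := continuous_grad f
    fun_prop
  obtain ⟨z, hz, hz0⟩ := isPreconnected_connectedComponentIn.intermediate_value hy
    (mem_connectedComponentIn hxF) hcont.continuousOn ⟨hle, hx.le⟩
  obtain ⟨hzΓ, hzc⟩ := hF (connectedComponentIn_subset F x hz)
  exact inner_grad_self_ne_zero hzΓ hzc hz0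

/-- If `a < ‖w‖`, follow the curve of Condition 1 from `w` towards smaller norms: as `∇f = l w`
with `l > 0`, the derivatives of `f` and of `‖·‖²` along it have the same sign, so `f` drops
while the curve stays in the component. -/
theorem norm_eq_of_isMinOn_connectedComponentIn {sR a r : ℝ} {x w : EuclideanSpace ℝ (Fin n)}
    (hcond : Cond1 f sR) (hr : r < sR)
    (hw : w ∈ connectedComponentIn (Gamma f ∩ (closedBall 0 r \ ball 0 a)) x)
    (hpos : 0 < ⟪grad f w, w⟫)
    (hmin : IsMinOn (evalP f) (connectedComponentIn (Gamma f ∩ (closedBall 0 r \ ball 0 a)) x) w) :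
    ‖w‖ = a := by
  obtain ⟨⟨l, hl⟩, hwr, hwa⟩ := connectedComponentIn_subset _ x hw
  rw [mem_closedBall_zero_iff] at hwr
  rw [mem_ball_zero_iff, not_lt] at hwa
  refine (hwa.eq_or_lt.resolve_right fun hlt => ?_).symm
  have hw0 : w ≠ 0 := by rintro rfl; simp at hpos
  have hl0 : 0 < l := by
    rw [hl, real_inner_smul_left, real_inner_self_eq_norm_sq] at hpos
    exact (pos_iff_pos_of_mul_pos hpos).2 (by positivity)
  obtain ⟨O, a', b', tb, φ, -, -, ha', hb', hφ, himg, hφtb, hderiv⟩ :=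
    hcond w ⟨l, hl⟩ hw0 (hwr.trans_lt hr)
  have htb : tb ∈ Ioo a' b' := ⟨ha', hb'⟩
  have hφ' := (hφ tb htb).hasDerivAt
  have hh := hφ'.norm_sq
  have hg := hφ'.evalP_comp f
  rw [hφtb] at hh hg
  rw [hl, real_inner_smul_left, show l * ⟪w, deriv φ tb⟫ = l / 2 * (2 * ⟪w, deriv φ tb⟫) by ring]
    at hg
  have hP : ∀ᶠ s in 𝓝 tb, s ∈ Ioo a' b' ∧ a < ‖φ s‖ :=
    Filter.Eventually.and (isOpen_Ioo.mem_nhds htb)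
      (hφ'.continuousAt.norm.eventually (eventually_gt_nhds (show a < ‖φ tb‖ by rwa [hφtb])))
  obtain ⟨s, hs, harc⟩ := exists_lt_forall_uIcc_of_hasDerivAt hh hg (half_pos hl0)
    (hh.deriv ▸ hderiv) hP
  have hsC : φ s ∈ connectedComponentIn (Gamma f ∩ (closedBall 0 r \ ball 0 a)) x := by
    refine mem_connectedComponentIn_of_continuousOn_uIcc
      (fun s' hs' => (hφ s' (harc s' hs').1.1).continuousAt.continuousWithinAt)
      (fun s' hs' => ?_) (hφtb ▸ hw)
    obtain ⟨⟨hs'I, hs'a⟩, hs'w⟩ := harc s' hs'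
    rw [hφtb, pow_le_pow_iff_left₀ (norm_nonneg _) (norm_nonneg _) two_ne_zero] at hs'w
    exact ⟨(himg ▸ mem_image_of_mem φ hs'I).1, mem_closedBall_zero_iff.2 (hs'w.trans hwr),
      by simpa using hs'a.le⟩
  exact (hmin hsC).not_gt (hφtb ▸ hs)

theorem exists_norm_eq_isMinOn_connectedComponentIn {sR a r : ℝ} {x : EuclideanSpace ℝ (Fin n)}
    (hgrad : grad f 0 = 0) (hcond : Cond1 f sR) (hr : r < sR)
    (hcrit : Crit f ∩ closedBall 0 r ⊆ {0}) (ha : 0 < a)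
    (hx : x ∈ Gamma f ∩ (closedBall 0 r \ ball 0 a)) (hpos : 0 < ⟪grad f x, x⟫) :
    ∃ w ∈ connectedComponentIn (Gamma f ∩ (closedBall 0 r \ ball 0 a)) x, ‖w‖ = a ∧
      IsMinOn (evalP f) (connectedComponentIn (Gamma f ∩ (closedBall 0 r \ ball 0 a)) x) w := by
  have hF : IsCompact (Gamma f ∩ (closedBall 0 r \ ball 0 a)) :=
    (isCompact_closedBall 0 r).of_isClosed_subset
      ((isClosed_Gamma hgrad).inter (isClosed_closedBall.sdiff isOpen_ball)) fun y hy => hy.2.1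
  have hFΓ : Gamma f ∩ (closedBall 0 r \ ball 0 a) ⊆ Gamma f \ Crit f :=
    fun y ⟨hyΓ, hyr, hya⟩ => ⟨hyΓ, fun hyc => hya (mem_singleton_iff.1 (hcrit ⟨hyc, hyr⟩) ▸
      mem_ball_self ha)⟩
  obtain ⟨w, hw, hmin⟩ := (hF.connectedComponentIn x).exists_isMinOn
    ⟨x, mem_connectedComponentIn hx⟩ (continuous_evalP f).continuousOn
  exact ⟨w, hw, norm_eq_of_isMinOn_connectedComponentIn hcond hr hw
    (inner_grad_self_pos_of_mem_connectedComponentIn hFΓ hpos hw) hmin, hmin⟩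

theorem exists_forall_exists_norm_eq_evalP_le {sR : ℝ} {x : EuclideanSpace ℝ (Fin n)}
    (hgrad : grad f 0 = 0) (hcond : Cond1 f sR) (hx : ‖x‖ < sR)
    (hcrit : Crit f ∩ closedBall 0 ‖x‖ ⊆ {0}) (hxΓ : x ∈ Gamma f) (hpos : 0 < ⟪grad f x, x⟫) :
    ∃ y, y ≠ 0 ∧ ‖y‖ < ‖x‖ ∧ ∀ a ∈ Ioc 0 ‖y‖, ∃ w, ‖w‖ = a ∧ evalP f w ≤ evalP f y := by
  have hx0 : 0 < ‖x‖ := norm_pos_iff.2 (by rintro rfl; simp at hpos)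
  have key (a : ℝ) (ha : 0 < a) (hax : a ≤ ‖x‖) :=
    exists_norm_eq_isMinOn_connectedComponentIn hgrad hcond hx hcrit ha
      ⟨hxΓ, mem_closedBall_zero_iff.2 le_rfl, by simpa using hax⟩ hpos
  obtain ⟨y, hyC, hy, -⟩ := key (‖x‖ / 2) (half_pos hx0) (half_le_self hx0.le)
  refine ⟨y, norm_pos_iff.1 (hy ▸ half_pos hx0), hy ▸ half_lt_self hx0, fun a ⟨ha, hay⟩ => ?_⟩
  obtain ⟨w, -, hw, hmin⟩ := key a ha (hay.trans (hy ▸ half_le_self hx0.le))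
  exact ⟨w, hw, hmin (connectedComponentIn_mono x (inter_subset_inter_right _
    (sdiff_subset_sdiff_right (ball_subset_ball (hy ▸ hay)))) hyC)⟩

end TangencyVariety

section LocalMax

variable {n : ℕ} {f : MvPolynomial (Fin n) ℝ} {R : ℝ}

theorem exists_forall_evalP_neg_of_isLocalMax (hf0 : evalP f 0 = 0) (hR : 0 < R)
    (hcrit : Crit f ∩ closedBall 0 R ⊆ {0}) (hmax : IsLocalMax (evalP f) 0) :
    ∃ ε > 0, ∀ y, y ≠ 0 → ‖y‖ ≤ ε → evalP f y < 0 := by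
  obtain ⟨δ, hδ, hball⟩ := Metric.mem_nhds_iff.1 hmax
  refine ⟨min (δ / 2) R, by positivity, fun y hy0 hy => ?_⟩
  have hyδ : y ∈ ball 0 δ :=
    mem_ball_zero_iff.2 (by linarith [min_le_left (δ / 2) R])
  refine hf0 ▸ (hball hyδ).lt_of_ne fun hfy => hy0 (mem_singleton_iff.1 (hcrit ⟨?_, ?_⟩))
  · exact grad_eq_zero_of_isLocalMax
      (IsMaxOn.isLocalMax (fun z hz => hfy ▸ hball hz) (isOpen_ball.mem_nhds hyδ))
  · exact mem_closedBall_zero_iff.2 (hy.trans (min_le_right _ _))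

theorem evalP_neg_of_isLocalMax {sR : ℝ} (hf0 : evalP f 0 = 0) (hgrad : grad f 0 = 0)
    (hcond : Cond1 f sR) (hR : 0 < R) (hRs : R < sR) (hcrit : Crit f ∩ closedBall 0 R ⊆ {0})
    (hmax : IsLocalMax (evalP f) 0) {x : EuclideanSpace ℝ (Fin n)} (hx0 : x ≠ 0)
    (hxR : ‖x‖ ≤ R) : evalP f x < 0 := by
  by_contra! hfx
  obtain ⟨ε, hε, hneg⟩ := exists_forall_evalP_neg_of_isLocalMax hf0 hR hcrit hmax
  obtain ⟨z, hz0, hzx, hzmax, hzneg⟩ :=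
    exists_isMaxOn_closedBall_of_nonneg (continuous_evalP f) hf0 hε hneg hx0 hfx
  have hzR : ‖z‖ ≤ R := hzx.trans hxR
  have hcrit' : Crit f ∩ closedBall 0 ‖z‖ ⊆ {0} :=
    (inter_subset_inter_right _ (closedBall_subset_closedBall hzR)).trans hcrit
  have hzΓ : z ∈ Gamma f :=
    mem_Gamma_of_isMaxOn_sphere hz0 (hzmax.on_subset sphere_subset_closedBall)
  have hzpos : 0 < ⟪grad f z, z⟫ :=
    (apply_self_nonneg_of_isMaxOn_closedBall (hasFDerivAt_evalP f z) hzmax).lt_of_ne'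
      (inner_grad_self_ne_zero hzΓ fun hc => hz0 (hcrit' ⟨hc, mem_closedBall_zero_iff.2 le_rfl⟩))
  obtain ⟨y, hy0, hyz, hy⟩ :=
    exists_forall_exists_norm_eq_evalP_le hgrad hcond (hzR.trans_lt hRs) hcrit' hzΓ hzpos
  have hfy : evalP f y < evalP f 0 := hf0 ▸ hzneg y hy0 hyz
  obtain ⟨δ, hδ, hδf⟩ := Metric.eventually_nhds_iff.1
    ((continuous_evalP f).continuousAt.eventually (eventually_gt_nhds hfy))
  have hy' : 0 < ‖y‖ := norm_pos_iff.2 hy0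
  obtain ⟨w, hw, hfw⟩ := hy (min (δ / 2) ‖y‖) ⟨by positivity, min_le_right _ _⟩
  refine (hfw.trans_lt (hδf ?_)).false
  rw [dist_zero_right, hw]
  linarith [min_le_left (δ / 2) ‖y‖]

theorem isLocalMax_of_forall_Gamma_sphere_evalP_neg (hf0 : evalP f 0 = 0) (hR : 0 < R)
    (hcrit : Crit f ∩ closedBall 0 R ⊆ {0})
    (h : ∀ x ∈ Gamma f ∩ sphere 0 R, evalP f x < 0) : IsLocalMax (evalP f) 0 := by
  obtain ⟨z, hz, hmax⟩ := (isCompact_closedBall (0 : EuclideanSpace ℝ (Fin n)) R).exists_isMaxOn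
    (nonempty_closedBall.2 hR.le) (continuous_evalP f).continuousOn
  have hfz : evalP f z ≤ 0 := by
    rcases (mem_closedBall_zero_iff.1 hz).lt_or_eq with hlt | heq
    · have hzmax := hmax.isLocalMax (closedBall_mem_nhds_of_mem (mem_ball_zero_iff.2 hlt))
      rw [mem_singleton_iff.1 (hcrit ⟨grad_eq_zero_of_isLocalMax hzmax, hz⟩), hf0]
    · have hz0 : z ≠ 0 := by rintro rfl; simp [hR.ne] at heq
      exact (h z ⟨mem_Gamma_of_isMaxOn_sphere hz0 (heq ▸ hmax.on_subset sphere_subset_closedBall),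
        mem_sphere_zero_iff_norm.2 heq⟩).le
  exact IsMaxOn.isLocalMax (fun y hy => hf0 ▸ (hmax hy).trans hfz) (closedBall_mem_nhds 0 hR)

end LocalMax

theorem stmt15_general (n : ℕ) (f : MvPolynomial (Fin n) ℝ)
    (hf0 : evalP f 0 = 0) (hgrad : grad f 0 = 0)
    (sR : ℝ) (hcond : Cond1 f sR) (R : ℝ) (hR : 0 < R)
    (hiso : Crit f ∩ closedBall (0 : EuclideanSpace ℝ (Fin n)) R = {0}) (hRlt : R < sR) :
    IsLocalMax (evalP f) 0 ↔
      ∀ x ∈ Gamma f ∩ sphere (0 : EuclideanSpace ℝ (Fin n)) R, evalP f x < 0 :=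
  ⟨fun hmax _ hx => evalP_neg_of_isLocalMax hf0 hgrad hcond hR hRlt hiso.subset hmax
      (ne_of_mem_sphere hx.2 hR.ne') (mem_sphere_zero_iff_norm.1 hx.2).le,
    isLocalMax_of_forall_Gamma_sphere_evalP_neg hf0 hR hiso.subset⟩

/-- If `sR > 0` satisfies Condition 1, `R` is an isolation radius of `0`, and
`R < sR`, then `0` is a local maximizer of `f` if and only if `f(x) < 0` for every `x ∈ Γ_ℝ(f) ∩ S_R`. -/
theorem stmt15 (n : ℕ) (f : MvPolynomial (Fin n) ℝ)
    (hf0 : evalP f 0 = 0) (hgrad : grad f 0 = 0)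
    (sR : ℝ) (hsR : 0 < sR) (hcond : Cond1 f sR) (R : ℝ) (hR : 0 < R)
    (hiso : Crit f ∩ closedBall (0 : EuclideanSpace ℝ (Fin n)) R = {0}) (hRlt : R < sR) :
    IsLocalMax (evalP f) 0 ↔
      ∀ x ∈ Gamma f ∩ sphere (0 : EuclideanSpace ℝ (Fin n)) R, evalP f x < 0 :=
  stmt15_general n f hf0 hgrad sR hcond R hR hiso hRlt
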